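/- Let M be a simple ternary matroid with no coloops that is k-paving. Then the ground set of M is a circuit of M, or r(M) ≤ 4k + 2. -/

import Mathlib

namespace Matroid

variable {α : Type*}

/-- A circuit of a matroid is a minimal dependent set. -/
def Circuit (M : Matroid α) (C : Set α) : Prop :=
  M.Dep C ∧ ∀ D, D ⊂ C → M.Indep D

/-- A coloop is an element belonging to every basis. -/
def Coloop (M : Matroid α) (e : α) : Prop :=
  e ∈ M.E ∧ ∀ B, M.IsBase B → e ∈ B

/-- A matroid is simple if every subset of the ground set with at most two
elements is independent. -/
def Simple (M : Matroid α) : Prop :=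
  ∀ e ∈ M.E, ∀ f ∈ M.E, M.Indep {e, f}

/-- The rank of a matroid: the supremum of the cardinalities of its bases. -/
noncomputable def rk (M : Matroid α) : ℕ :=
  sSup {n | ∃ B, M.IsBase B ∧ B.ncard = n}

/-- A matroid is representable over a field `F` if independence in `M` coincides
with linear independence under some assignment of vectors to ground set elements. -/
def RepresentableOver (M : Matroid α) (F : Type) [Field F] : Prop :=
  ∃ (n : ℕ) (φ : α → (Fin n → F)),
    ∀ I, I ⊆ M.E → (M.Indep I ↔ LinearIndependent F (fun x : I => φ x))

/-- An element `e` is `k`-loose if every circuit containing `e` has size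
greater than `r - k`, where `r` is the rank of the matroid. -/
def KLoose (M : Matroid α) (k : ℕ) (e : α) : Prop :=
  e ∈ M.E ∧ ∀ C, M.Circuit C → e ∈ C → M.rk - k < C.ncard

/-- A matroid is `k`-paving if every element is `k`-loose. -/
def KPaving (M : Matroid α) (k : ℕ) : Prop :=
  ∀ e ∈ M.E, M.KLoose k e

end Matroid

/-!
Let `r = r(M)`. If two elements `e ≠ f` lie outside a base `B`, the fundamental circuits of `e`
and `f` carry dependency vectors `l, l'` over GF(3), and `l`, `l'`, `l + l'`, `l - l'` are nonzero
dependencies supported in `B ∪ {e, f}`. By `k`-pavingness each support has more than `r - k`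
elements, while over GF(3) the four supports together cover every element of
`supp l ∪ supp l'` exactly three times, so `4 (r - k + 1) ≤ 3 (r + 2)`, i.e. `r ≤ 4k + 2`.
Otherwise at most one element lies outside `B`; since there are no coloops, every element lies
on a circuit, which forces the ground set to be the fundamental circuit of that element.
-/

lemma ZMod.three_eq_count_ne_zero {a b : ZMod 3} (h : a ≠ 0 ∨ b ≠ 0) :
    ((if a ≠ 0 then 1 else 0) + (if b ≠ 0 then 1 else 0) + (if a + b ≠ 0 then 1 else 0)
      + (if a - b ≠ 0 then 1 else 0) : ℕ) = 3 := by
  revert a b; decide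

open Finset in
/-- `l`, `l'`, `l + l'`, `l - l'` are the four points of the projective line spanned by `l` and
`l'` over GF(3); a coordinate that does not vanish on the whole line vanishes at exactly one of
them. -/
lemma Finsupp.card_supports_line_zmod_three {α : Type*} [DecidableEq α] (l l' : α →₀ ZMod 3) :
    #l.support + #l'.support + #(l + l').support + #(l - l').support
      = 3 * #(l.support ∪ l'.support) := by
  set s := l.support ∪ l'.support
  have hcard {g : α →₀ ZMod 3} (hg : g.support ⊆ s) :
      #g.support = ∑ x ∈ s, if g x ≠ 0 then 1 else 0 := by
    simp_rw [← Finsupp.mem_support_iff]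
    rw [sum_ite_mem, inter_eq_right.2 hg, card_eq_sum_ones]
  rw [hcard subset_union_left, hcard subset_union_right, hcard support_add, hcard support_sub,
    ← sum_add_distrib, ← sum_add_distrib, ← sum_add_distrib, mul_comm, ← smul_eq_mul, ← sum_const]
  refine Finset.sum_congr rfl fun x hx ↦ ?_
  simp only [Finsupp.add_apply, Finsupp.sub_apply]
  exact ZMod.three_eq_count_ne_zero (by simpa [s, or_iff_not_imp_left] using hx)

namespace Matroid

variable {α : Type*} {M : Matroid α} {B C D : Set α} {e f : α} {k : ℕ}

lemma circuit_iff_isCircuit : M.Circuit C ↔ M.IsCircuit C := by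
  rw [isCircuit_iff_forall_ssubset]
  exact and_congr_right fun _ ↦ ⟨fun h _ ↦ h _, fun h _ ↦ @h _⟩

lemma coloop_iff_isColoop : M.Coloop e ↔ M.IsColoop e := by
  rw [isColoop_iff_forall_mem_isBase]
  exact ⟨fun h _ ↦ h.2 _, fun h ↦ ⟨M.exists_isBase.elim fun _ hB ↦ hB.subset_ground (h hB),
    fun _ ↦ @h _⟩⟩

lemma IsBase.rk_eq_ncard (hB : M.IsBase B) : M.rk = B.ncard := by
  have hranks : {n | ∃ B', M.IsBase B' ∧ B'.ncard = n} = {B.ncard} := by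
    ext n
    exact ⟨fun ⟨_, hB', hn⟩ ↦ hn ▸ hB'.ncard_eq_ncard_of_isBase hB, fun hn ↦ ⟨B, hB, hn.symm⟩⟩
  rw [rk, hranks, csSup_singleton]

lemma KPaving.sub_lt_ncard_of_dep (hM : M.KPaving k) (hD : M.Dep D) (hDfin : D.Finite) :
    M.rk - k < D.ncard := by
  obtain ⟨C, hCD, hC⟩ := hD.exists_isCircuit_subset
  obtain ⟨e, he⟩ := hC.nonempty
  exact ((hM e (hC.subset_ground he)).2 C (circuit_iff_isCircuit.2 hC) he).trans_le
    (Set.ncard_le_ncard hCD hDfin)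

lemma ground_eq_empty_of_isBase_ground (hcoloop : ∀ e, ¬ M.IsColoop e) (hE : M.IsBase M.E) :
    M.E = ∅ :=
  Set.eq_empty_of_forall_notMem fun e he ↦ by
    obtain ⟨C, hC, -⟩ := exists_mem_isCircuit_of_not_isColoop he (hcoloop e)
    exact hC.not_indep (hE.indep.subset hC.subset_ground)

lemma isCircuit_ground_of_ground_eq_insert (hcoloop : ∀ e, ¬ M.IsColoop e) (hB : M.IsBase B)
    (hfB : f ∉ B) (hE : M.E = insert f B) : M.IsCircuit M.E := by
  have hfE : f ∈ M.E := hE ▸ Set.mem_insert f B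
  suffices M.E ⊆ M.fundCircuit f B by
    rw [this.antisymm (M.fundCircuit_subset_ground hfE)]
    exact hB.fundCircuit_isCircuit hfE hfB
  intro x hx
  obtain ⟨C, hC, hxC⟩ := exists_mem_isCircuit_of_not_isColoop hx (hcoloop x)
  rwa [← hC.eq_fundCircuit_of_subset hB.indep (hE ▸ hC.subset_ground)]

def IsRepresentation (R : Type*) {W : Type*} [Semiring R] [AddCommMonoid W] [Module R W]
    (M : Matroid α) (φ : α → W) : Prop :=
  ∀ I ⊆ M.E, M.Indep I ↔ LinearIndepOn R φ I

namespace IsRepresentation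

variable {R W : Type*} [Ring R] [AddCommGroup W] [Module R W] {φ : α → W}

lemma dep_support (hφ : M.IsRepresentation R φ) {g : α →₀ R} (hg0 : g ≠ 0)
    (hgE : ↑g.support ⊆ M.E) (hg : Finsupp.linearCombination R φ g = 0) : M.Dep ↑g.support :=
  ⟨fun hind ↦ hg0 (linearIndepOn_iff.1 ((hφ _ hgE).1 hind) g
    ((Finsupp.mem_supported R g).2 subset_rfl) hg), hgE⟩

lemma exists_support_eq_of_isCircuit (hφ : M.IsRepresentation R φ) (hC : M.IsCircuit C) :
    ∃ l : α →₀ R, ↑l.support = C ∧ Finsupp.linearCombination R φ l = 0 := by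
  have hdep : ¬ LinearIndepOn R φ C := fun h ↦ hC.not_indep ((hφ C hC.subset_ground).2 h)
  obtain ⟨l, hlC, hl, hl0⟩ := linearDepOn_iff'.1 hdep
  have hlC : ↑l.support ⊆ C := (Finsupp.mem_supported R l).1 hlC
  exact ⟨l, hC.eq_of_dep_subset (hφ.dep_support hl0 (hlC.trans hC.subset_ground) hl) hlC, hl⟩

end IsRepresentation

theorem KPaving.rk_le_of_ne_of_notMem_isBase {W : Type*} [AddCommGroup W] [Module (ZMod 3) W]
    {φ : α → W} (hφ : M.IsRepresentation (ZMod 3) φ) (hM : M.KPaving k) (hB : M.IsBase B)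
    (he : e ∈ M.E \ B) (hf : f ∈ M.E \ B) (hef : e ≠ f) : M.rk ≤ 4 * k + 2 := by
  classical
  obtain hBinf | hBfin := B.infinite_or_finite
  · simp [hB.rk_eq_ncard, hBinf.ncard]
  obtain ⟨l, hl, hl0⟩ := hφ.exists_support_eq_of_isCircuit (hB.fundCircuit_isCircuit he.1 he.2)
  obtain ⟨l', hl', hl'0⟩ := hφ.exists_support_eq_of_isCircuit (hB.fundCircuit_isCircuit hf.1 hf.2)
  have hl_e : l e ≠ 0 := by
    rw [← Finsupp.mem_support_iff, ← Finset.mem_coe, hl]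
    exact M.mem_fundCircuit e B
  have hl'_f : l' f ≠ 0 := by
    rw [← Finsupp.mem_support_iff, ← Finset.mem_coe, hl']
    exact M.mem_fundCircuit f B
  have hl'_e : l' e = 0 := by
    rw [← Finsupp.notMem_support_iff, ← Finset.mem_coe, hl']
    exact fun h ↦ (M.fundCircuit_subset_insert f B h).elim hef he.2
  set s := l.support ∪ l'.support
  have hs : ↑s ⊆ insert e (insert f B) := by
    rw [Finset.coe_union, hl, hl']
    exact Set.union_subset
      ((M.fundCircuit_subset_insert e B).trans (Set.insert_subset_insert (Set.subset_insert f B)))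
      ((M.fundCircuit_subset_insert f B).trans (Set.subset_insert e _))
  have hsE : ↑s ⊆ M.E := hs.trans (Set.insert_subset he.1 (Set.insert_subset hf.1 hB.subset_ground))
  have hs_card : s.card ≤ M.rk + 2 := by
    rw [hB.rk_eq_ncard, ← Set.ncard_coe_finset]
    calc (s : Set α).ncard ≤ (insert e (insert f B)).ncard :=
          Set.ncard_le_ncard hs ((hBfin.insert f).insert e)
      _ ≤ B.ncard + 2 :=
          (Set.ncard_insert_le _ _).trans (Nat.add_le_add_right (Set.ncard_insert_le _ _) 1)
  have hlarge {g : α →₀ ZMod 3} (hg0 : g ≠ 0) (hgs : g.support ⊆ s)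
      (hg : Finsupp.linearCombination (ZMod 3) φ g = 0) : M.rk - k < g.support.card := by
    simpa using hM.sub_lt_ncard_of_dep
      (hφ.dep_support hg0 ((Finset.coe_subset.2 hgs).trans hsE) hg) g.support.finite_toSet
  have h₁ := hlarge (fun h ↦ hl_e (by simp [h])) Finset.subset_union_left hl0
  have h₂ := hlarge (fun h ↦ hl'_f (by simp [h])) Finset.subset_union_right hl'0
  have h₃ := hlarge (g := l + l') (fun h ↦ hl_e (by simpa [hl'_e] using congr($h e)))
    Finsupp.support_add (by simp [hl0, hl'0])
  have h₄ := hlarge (g := l - l') (fun h ↦ hl_e (by simpa [hl'_e] using congr($h e)))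
    Finsupp.support_sub (by simp [hl0, hl'0])
  have hcount : l.support.card + l'.support.card + (l + l').support.card + (l - l').support.card
      = 3 * s.card :=
    Finsupp.card_supports_line_zmod_three l l'
  omega

end Matroid

theorem ternary_paving_rank_bound_general {α : Type*} (k : ℕ) (M : Matroid α)
    (hternary : M.RepresentableOver (ZMod 3))
    (hcoloop : ∀ x, ¬ M.Coloop x) (hpaving : M.KPaving k) :
    M.Circuit M.E ∨ M.rk ≤ 4 * k + 2 := by
  obtain ⟨n, φ, hφ⟩ := hternary
  have hno_coloop (x : α) : ¬ M.IsColoop x := Matroid.coloop_iff_isColoop.not.1 (hcoloop x)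
  obtain ⟨B, hB⟩ := M.exists_isBase
  rw [Matroid.circuit_iff_isCircuit]
  obtain hEB | ⟨e, he, f, hf, hef⟩ := (M.E \ B).subsingleton_or_nontrivial
  · obtain hEB | ⟨f, hEB⟩ := hEB.eq_empty_or_singleton
    · have hBE : B = M.E := hB.subset_ground.antisymm (Set.sdiff_eq_empty.1 hEB)
      subst hBE
      simp [hB.rk_eq_ncard, Matroid.ground_eq_empty_of_isBase_ground hno_coloop hB]
    · have hf : f ∈ M.E \ B := hEB ▸ Set.mem_singleton f
      have hE : M.E = insert f B := by
        rw [← Set.union_sdiff_cancel hB.subset_ground, hEB, Set.union_singleton]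
      exact .inl (Matroid.isCircuit_ground_of_ground_eq_insert hno_coloop hB hf.2 hE)
  · exact .inr (hpaving.rk_le_of_ne_of_notMem_isBase hφ hB he hf hef)

/-- A simple ternary matroid with no coloops that is `k`-paving is a circuit, or has
rank at most `4k + 2`. -/
theorem ternary_paving_rank_bound {α : Type*} (k : ℕ) (M : Matroid α) [M.Finite]
    (hsimple : M.Simple) (hternary : M.RepresentableOver (ZMod 3))
    (hcoloop : ∀ x, ¬ M.Coloop x) (hpaving : M.KPaving k) :
    M.Circuit M.E ∨ M.rk ≤ 4 * k + 2 :=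
  ternary_paving_rank_bound_general k M hternary hcoloop hpaving
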